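/- arXiv:1611.01254 — 3 statements merged into one kernel-verified Lean document; each statement's English description precedes it below -/
import Mathlib

section
/- Let R be a stable conservative Q-matrix on ℕ with total rates r_i, and let A be a bounded stable conservative Q-matrix with γ = sup_i a_i < ∞, where a_i = -a_ii. Set Q = R + A, a'_ij = a_ij + γ δ_ij ≥ 0, and q'_ik = a'_ik + (1 - δ_ik) r_ik. Define the successive approximations R^(0)_ij(t) = δ_ij e^{-r_i t}, R^(n+1)_ij(t) = Σ_{k≠i} ∫_0^t e^{-r_i(t−s)} r_ik R^(n)_kj(s) ds, and Q^(0)_ij(t) = δ_ij e^{-(r_i+γ)t}, Q^(n+1)_ij(t) = Σ_k ∫_0^t e^{-(r_i+γ)(t−s)} q'_ik Q^(n)_kj(s) ds. Then for every n ≥ 0, Q^(n)_ij(t) = Σ_{p=0}^{n−1} Σ_{l,k} ∫_0^t e^{-γ(t−s)} R^(n−p−1)_il(t−s) a'_lk Q^(p)_kj(s) ds + R^(n)_ij(t) e^{-γ t} (with the empty sum equal to 0 when n = 0). -/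
/-!
Multiply matrices of functions on the half-line by the causal convolution
`(F ⋆ G)ᵢⱼ(t) = ∑ₖ ∫₀ᵗ Fᵢₖ(t - s) Gₖⱼ(s) ds`. With `F` the damped jump part
`e^{-(rᵢ+γ)u} (1 - δᵢₖ) rᵢₖ`, `S₀ = δᵢⱼ e^{-(rᵢ+γ)u}` and `B = S₀ a'`, the recursions say
`e^{-γt} R⁽ⁿ⁾ = F^{⋆n} ⋆ S₀` and `Q⁽ⁿ⁾ = (F + B)^{⋆n} ⋆ S₀` (the first because the weight `e^{-γt}`
factors through a convolution). The theorem is then the Dyson expansion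
`(F + B)^{⋆n} ⋆ S₀ = ∑_{p<n} (F^{⋆(n-p-1)} ⋆ B) ⋆ (F + B)^{⋆p} ⋆ S₀ + F^{⋆n} ⋆ S₀`,
which follows by induction on `n` from bilinearity and associativity of `⋆`. Associativity is
that of convolution on `ℝ` for functions extended by zero to `(-∞, 0]`, and every exchange of
sums and integrals is Tonelli's theorem; both need measurability, which is why the `Rn`, `Qn` of
the statement are first identified on `t ≥ 0` with the canonical, measurable iterates.
-/

open MeasureTheory ENNReal Set

noncomputable def causalConv (f g : ℝ → ℝ≥0∞) (t : ℝ) : ℝ≥0∞ :=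
  ∫⁻ s in Ioc 0 t, f (t - s) * g s

section causalConv

theorem causalConv_eq_lconvolution (f g : ℝ → ℝ≥0∞) :
    causalConv f g = (Ioi 0).indicator g ⋆ₗ (Ioi 0).indicator f := by
  ext t
  have hind : ∀ s, (Ioi 0).indicator g s * (Ioi 0).indicator f (-s + t)
      = (Ioo 0 t).indicator (fun s => f (t - s) * g s) s := by
    intro s
    simp only [indicator_apply, mem_Ioi, mem_Ioo, neg_add_eq_sub, sub_pos]
    split_ifs <;> simp_all [mul_comm]
  rw [lconvolution_def, lintegral_congr hind, lintegral_indicator measurableSet_Ioo, causalConv,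
    setLIntegral_congr Ioo_ae_eq_Ioc]

theorem causalConv_eq_zero_of_nonpos (f g : ℝ → ℝ≥0∞) {t : ℝ} (ht : t ≤ 0) :
    causalConv f g t = 0 := by
  simp [causalConv, Ioc_eq_empty_of_le ht]

theorem indicator_Ioi_causalConv (f g : ℝ → ℝ≥0∞) :
    (Ioi 0).indicator (causalConv f g) = causalConv f g := by
  ext t
  by_cases ht : 0 < t
  · simp [ht]
  · simp [ht, causalConv_eq_zero_of_nonpos f g (not_lt.1 ht)]

variable {f g h : ℝ → ℝ≥0∞}

theorem measurable_causalConv (hf : Measurable f) (hg : Measurable g) :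
    Measurable (causalConv f g) := by
  rw [causalConv_eq_lconvolution]
  exact measurable_lconvolution _ (hg.indicator measurableSet_Ioi) (hf.indicator measurableSet_Ioi)

theorem causalConv_assoc (hf : Measurable f) (hg : Measurable g) (hh : Measurable h) :
    causalConv (causalConv f g) h = causalConv f (causalConv g h) := by
  rw [causalConv_eq_lconvolution (causalConv f g), causalConv_eq_lconvolution f (causalConv g h),
    indicator_Ioi_causalConv, indicator_Ioi_causalConv, causalConv_eq_lconvolution f g,
    causalConv_eq_lconvolution g h]
  exact lconvolution_assoc (hh.indicator measurableSet_Ioi) (hg.indicator measurableSet_Ioi)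
    (hf.indicator measurableSet_Ioi)

theorem measurable_causalConv_integrand (t : ℝ) (hf : Measurable f) (hg : Measurable g) :
    Measurable fun s => f (t - s) * g s :=
  (hf.comp (measurable_const.sub measurable_id)).mul hg

theorem causalConv_tsum_left {f : ℕ → ℝ → ℝ≥0∞} (hf : ∀ k, Measurable (f k))
    (hg : Measurable g) (t : ℝ) :
    causalConv (fun u => ∑' k, f k u) g t = ∑' k, causalConv (f k) g t := by
  simp only [causalConv, ← ENNReal.tsum_mul_right]
  exact lintegral_tsum fun k => (measurable_causalConv_integrand t (hf k) hg).aemeasurable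

theorem causalConv_tsum_right {g : ℕ → ℝ → ℝ≥0∞} (hf : Measurable f)
    (hg : ∀ k, Measurable (g k)) (t : ℝ) :
    causalConv f (fun u => ∑' k, g k u) t = ∑' k, causalConv f (g k) t := by
  simp only [causalConv, ← ENNReal.tsum_mul_left]
  exact lintegral_tsum fun k => (measurable_causalConv_integrand t hf (hg k)).aemeasurable

theorem causalConv_add_left {f' : ℝ → ℝ≥0∞} (hf : Measurable f) (hg : Measurable g) (t : ℝ) :
    causalConv (f + f') g t = causalConv f g t + causalConv f' g t := by
  simp only [causalConv, Pi.add_apply, add_mul]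
  exact lintegral_add_left (measurable_causalConv_integrand t hf hg) _

theorem causalConv_add_right {g' : ℝ → ℝ≥0∞} (hf : Measurable f) (hg : Measurable g) (t : ℝ) :
    causalConv f (g + g') t = causalConv f g t + causalConv f g' t := by
  simp only [causalConv, Pi.add_apply, mul_add]
  exact lintegral_add_left (measurable_causalConv_integrand t hf hg) _

theorem causalConv_finset_sum_right {ι : Type*} (s : Finset ι) {g : ι → ℝ → ℝ≥0∞}
    (hf : Measurable f) (hg : ∀ p, Measurable (g p)) (t : ℝ) :
    causalConv f (∑ p ∈ s, g p) t = ∑ p ∈ s, causalConv f (g p) t := by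
  simp only [causalConv, Finset.sum_apply, Finset.mul_sum]
  exact lintegral_finsetSum _ fun p _ => measurable_causalConv_integrand t hf (hg p)

theorem causalConv_mul_const (hf : Measurable f) (hg : Measurable g) (c : ℝ≥0∞) (t : ℝ) :
    causalConv f (fun u => g u * c) t = causalConv f g t * c := by
  simp only [causalConv, ← mul_assoc]
  exact lintegral_mul_const c (measurable_causalConv_integrand t hf hg)

end causalConv

noncomputable def matConv (F G : ℕ → ℕ → ℝ → ℝ≥0∞) (i j : ℕ) : ℝ → ℝ≥0∞ :=
  fun t => ∑' k, causalConv (F i k) (G k j) t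

noncomputable def mulMat (M : ℕ → ℕ → ℝ → ℝ≥0∞) (a : ℕ → ℕ → ℝ≥0∞) (i k : ℕ) :
    ℝ → ℝ≥0∞ :=
  fun t => ∑' l, M i l t * a l k

section matConv

variable {F F' G G' H M B S : ℕ → ℕ → ℝ → ℝ≥0∞}

theorem measurable_matConv (hF : ∀ i k, Measurable (F i k)) (hG : ∀ k j, Measurable (G k j))
    (i j : ℕ) : Measurable (matConv F G i j) :=
  Measurable.tsum fun k => measurable_causalConv (hF i k) (hG k j)

theorem measurable_iterate_matConv (hF : ∀ i k, Measurable (F i k))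
    (hG : ∀ k j, Measurable (G k j)) (n : ℕ) : ∀ i j, Measurable ((matConv F)^[n] G i j) := by
  induction n with
  | zero => exact hG
  | succ n ih =>
    rw [Function.iterate_succ_apply']
    exact measurable_matConv hF ih

theorem measurable_mulMat (hM : ∀ i l, Measurable (M i l)) (a : ℕ → ℕ → ℝ≥0∞) (i k : ℕ) :
    Measurable (mulMat M a i k) :=
  Measurable.tsum fun l => (hM i l).mul_const _

theorem matConv_assoc (hF : ∀ i k, Measurable (F i k)) (hG : ∀ k j, Measurable (G k j))
    (hH : ∀ k j, Measurable (H k j)) : matConv (matConv F G) H = matConv F (matConv G H) := by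
  ext i j t
  unfold matConv
  simp_rw [causalConv_tsum_left (fun k => measurable_causalConv (hF i k) (hG k _)) (hH _ j),
    causalConv_tsum_right (hF i _) (fun m => measurable_causalConv (hG _ m) (hH m j)),
    causalConv_assoc (hF _ _) (hG _ _) (hH _ _)]
  exact ENNReal.tsum_comm

theorem matConv_add_left (hF : ∀ i k, Measurable (F i k)) (hG : ∀ k j, Measurable (G k j)) :
    matConv (F + F') G = matConv F G + matConv F' G := by
  ext i j t
  simp only [matConv, Pi.add_apply, ← ENNReal.tsum_add]
  exact tsum_congr fun k => causalConv_add_left (hF i k) (hG k j) t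

theorem matConv_add_right (hF : ∀ i k, Measurable (F i k)) (hG : ∀ k j, Measurable (G k j)) :
    matConv F (G + G') = matConv F G + matConv F G' := by
  ext i j t
  simp only [matConv, Pi.add_apply, ← ENNReal.tsum_add]
  exact tsum_congr fun k => causalConv_add_right (hF i k) (hG k j) t

theorem matConv_finset_sum_right {ι : Type*} (s : Finset ι) {G : ι → ℕ → ℕ → ℝ → ℝ≥0∞}
    (hF : ∀ i k, Measurable (F i k)) (hG : ∀ p k j, Measurable (G p k j)) :
    matConv F (∑ p ∈ s, G p) = ∑ p ∈ s, matConv F (G p) := by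
  ext i j t
  simp only [matConv, Finset.sum_apply]
  rw [← Summable.tsum_finsetSum fun _ _ => ENNReal.summable]
  exact tsum_congr fun k => causalConv_finset_sum_right s (hF i k) (fun p => hG p k j) t

theorem matConv_mulMat (hF : ∀ i k, Measurable (F i k)) (hM : ∀ k l, Measurable (M k l))
    (a : ℕ → ℕ → ℝ≥0∞) : matConv F (mulMat M a) = mulMat (matConv F M) a := by
  ext i j t
  unfold matConv mulMat
  simp only [← ENNReal.tsum_mul_right]
  simp_rw [causalConv_tsum_right (hF i _) (fun l => (hM _ l).mul_const (a l j)),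
    causalConv_mul_const (hF i _) (hM _ _)]
  exact ENNReal.tsum_comm

theorem iterate_matConv_mulMat (hF : ∀ i k, Measurable (F i k))
    (hM : ∀ k l, Measurable (M k l)) (a : ℕ → ℕ → ℝ≥0∞) (n : ℕ) :
    (matConv F)^[n] (mulMat M a) = mulMat ((matConv F)^[n] M) a := by
  induction n with
  | zero => rfl
  | succ n ih =>
    rw [Function.iterate_succ_apply', Function.iterate_succ_apply', ih,
      matConv_mulMat hF (measurable_iterate_matConv hF hM n)]

theorem matConv_mulMat_apply (hM : ∀ i l, Measurable (M i l)) (hG : ∀ k j, Measurable (G k j))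
    (a : ℕ → ℕ → ℝ≥0∞) (i j : ℕ) (t : ℝ) :
    matConv (mulMat M a) G i j t =
      ∑' l, ∑' k, ∫⁻ s in Ioc 0 t, M i l (t - s) * a l k * G k j s := by
  unfold matConv mulMat
  simp_rw [causalConv_tsum_left (fun l => (hM i l).mul_const _) (hG _ j)]
  exact ENNReal.tsum_comm

theorem matConv_congr_right (h : ∀ k j s, 0 < s → G k j s = G' k j s) (i j : ℕ) (t : ℝ) :
    matConv F G i j t = matConv F G' i j t :=
  tsum_congr fun k => setLIntegral_congr_fun measurableSet_Ioc fun s hs => by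
    rw [h k j s hs.1]

theorem iterate_matConv_of_recursion {X : ℕ → ℕ → ℕ → ℝ → ℝ≥0∞}
    (h0 : ∀ i j t, 0 ≤ t → X 0 i j t = G i j t)
    (hsucc : ∀ n i j t, 0 ≤ t → X (n + 1) i j t = matConv F (X n) i j t) (n : ℕ) :
    ∀ i j t, 0 ≤ t → X n i j t = (matConv F)^[n] G i j t := by
  induction n with
  | zero => exact h0
  | succ n ih =>
    intro i j t ht
    rw [hsucc n i j t ht, Function.iterate_succ_apply']
    exact matConv_congr_right (fun k j s hs => ih k j s hs.le) i j t

theorem iterate_matConv_add (hF : ∀ i k, Measurable (F i k)) (hB : ∀ i k, Measurable (B i k))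
    (hS : ∀ i j, Measurable (S i j)) (n : ℕ) :
    (matConv (F + B))^[n] S =
      ∑ p ∈ Finset.range n, matConv ((matConv F)^[n - p - 1] B) ((matConv (F + B))^[p] S)
        + (matConv F)^[n] S := by
  induction n with
  | zero => simp
  | succ n ih =>
    have hQ := measurable_iterate_matConv (F := F + B) (fun i k => (hF i k).add (hB i k)) hS
    have hFB := measurable_iterate_matConv hF hB
    have hF_part : matConv F ((matConv (F + B))^[n] S) =
        ∑ p ∈ Finset.range n, matConv ((matConv F)^[n - p] B) ((matConv (F + B))^[p] S)
          + (matConv F)^[n + 1] S := by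
      have hsum : ∀ i j, Measurable ((∑ p ∈ Finset.range n,
          matConv ((matConv F)^[n - p - 1] B) ((matConv (F + B))^[p] S)) i j) := fun i j => by
        rw [Finset.sum_apply, Finset.sum_apply, Finset.sum_fn]
        exact Finset.measurable_sum _ fun p _ => measurable_matConv (hFB _) (hQ p) i j
      rw [ih, matConv_add_right hF hsum,
        matConv_finset_sum_right _ hF fun p => measurable_matConv (hFB _) (hQ p),
        Function.iterate_succ_apply' (matConv F) n S]
      congr 1
      refine Finset.sum_congr rfl fun p hp => ?_
      rw [← matConv_assoc hF (hFB _) (hQ p), ← Function.iterate_succ_apply' (matConv F)]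
      congr 3
      have := Finset.mem_range.1 hp
      omega
    have hidx : ∀ p, n + 1 - p - 1 = n - p := fun p => by omega
    rw [Function.iterate_succ_apply', matConv_add_left hF (hQ n), hF_part, Finset.sum_range_succ]
    simp only [hidx, Nat.sub_self, Function.iterate_zero, id]
    abel

end matConv

/- With `rᵢ = -R i i`: `jumpKernel R γ i k u = e^{-(rᵢ+γ)u} (1 - δᵢₖ) rᵢₖ`,
`diagKernel R γ i j u = δᵢⱼ e^{-(rᵢ+γ)u}` and `shiftDiag A γ` is the matrix `a'`. -/
noncomputable def jumpKernel (R : ℕ → ℕ → ℝ) (γ : ℝ) : ℕ → ℕ → ℝ → ℝ≥0∞ :=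
  fun i k u => ENNReal.ofReal (Real.exp ((R i i - γ) * u) * if k = i then 0 else R i k)

noncomputable def diagKernel (R : ℕ → ℕ → ℝ) (γ : ℝ) : ℕ → ℕ → ℝ → ℝ≥0∞ :=
  fun i j u => if i = j then ENNReal.ofReal (Real.exp ((R i i - γ) * u)) else 0

noncomputable def shiftDiag (A : ℕ → ℕ → ℝ) (γ : ℝ) : ℕ → ℕ → ℝ≥0∞ :=
  fun l k => ENNReal.ofReal (A l k + if l = k then γ else 0)

theorem measurable_jumpKernel (R : ℕ → ℕ → ℝ) (γ : ℝ) (i k : ℕ) :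
    Measurable (jumpKernel R γ i k) := by
  unfold jumpKernel
  fun_prop

theorem measurable_diagKernel (R : ℕ → ℕ → ℝ) (γ : ℝ) (i j : ℕ) :
    Measurable (diagKernel R γ i j) := by
  unfold diagKernel
  split_ifs <;> fun_prop

theorem ofReal_exp_mul_mul_ofReal_exp (a b x : ℝ) :
    ENNReal.ofReal (Real.exp a * x) * ENNReal.ofReal (Real.exp b) =
      ENNReal.ofReal (Real.exp (a + b) * x) := by
  rw [mul_comm, ← ENNReal.ofReal_mul (Real.exp_nonneg _), ← mul_assoc, ← Real.exp_add, add_comm]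

section perturbation

variable {R A : ℕ → ℕ → ℝ} {γ : ℝ}

theorem add_ite_iSup_neg_diag_nonneg (hApos : ∀ i j, i ≠ j → 0 ≤ A i j)
    (hbdd : BddAbove (range fun i => -A i i)) (l k : ℕ) :
    0 ≤ A l k + if l = k then ⨆ i, -A i i else 0 := by
  split_ifs with h
  · subst h
    linarith [le_ciSup hbdd l]
  · simpa using hApos l k h

theorem jumpKernel_add_mulMat_diagKernel (hR : ∀ i k, i ≠ k → 0 ≤ R i k)
    (hA : ∀ l k, 0 ≤ A l k + if l = k then γ else 0) :
    jumpKernel R γ + mulMat (diagKernel R γ) (shiftDiag A γ) = fun i k u =>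
      ENNReal.ofReal (Real.exp ((R i i - γ) * u) *
        ((A i k + if i = k then γ else 0) + if k = i then 0 else R i k)) := by
  ext i k u
  have hR' : 0 ≤ if k = i then 0 else R i k := by
    split_ifs with h
    · exact le_rfl
    · exact hR i k (Ne.symm h)
  have hdiag : mulMat (diagKernel R γ) (shiftDiag A γ) i k u =
      ENNReal.ofReal (Real.exp ((R i i - γ) * u)) * shiftDiag A γ i k := by
    unfold mulMat diagKernel
    rw [tsum_eq_single i fun l hl => by simp [Ne.symm hl]]
    simp
  rw [Pi.add_apply, Pi.add_apply, Pi.add_apply, hdiag, jumpKernel, shiftDiag,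
    ← ENNReal.ofReal_mul (Real.exp_nonneg _), ← ENNReal.ofReal_add
      (mul_nonneg (Real.exp_nonneg _) hR') (mul_nonneg (Real.exp_nonneg _) (hA i k)), ← mul_add,
    add_comm]

theorem mul_exp_zero_eq_diagKernel {Rn0 : ℕ → ℕ → ℝ → ℝ≥0∞}
    (hRn0 : ∀ i j t, 0 ≤ t → Rn0 i j t =
      if i = j then ENNReal.ofReal (Real.exp (R i i * t)) else 0)
    (i j : ℕ) (t : ℝ) (ht : 0 ≤ t) :
    Rn0 i j t * ENNReal.ofReal (Real.exp (-γ * t)) = diagKernel R γ i j t := by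
  rw [hRn0 i j t ht, diagKernel]
  split_ifs
  · rw [← ENNReal.ofReal_mul (Real.exp_nonneg _), ← Real.exp_add]
    ring_nf
  · exact zero_mul _

theorem mul_exp_succ_eq_matConv_jumpKernel {Rn : ℕ → ℕ → ℕ → ℝ → ℝ≥0∞}
    (hRnrec : ∀ n i j t, 0 ≤ t → Rn (n + 1) i j t =
      ∑' k, if k = i then 0 else
        ∫⁻ s in Ioc (0 : ℝ) t, ENNReal.ofReal (Real.exp (R i i * (t - s)) * R i k) * Rn n k j s)
    (n i j : ℕ) (t : ℝ) (ht : 0 ≤ t) :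
    Rn (n + 1) i j t * ENNReal.ofReal (Real.exp (-γ * t)) =
      matConv (jumpKernel R γ) (fun k j s => Rn n k j s * ENNReal.ofReal (Real.exp (-γ * s)))
        i j t := by
  rw [hRnrec n i j t ht, ← ENNReal.tsum_mul_right]
  refine tsum_congr fun k => ?_
  unfold causalConv jumpKernel
  split_ifs with hk
  · simp
  rw [← lintegral_mul_const' _ _ ENNReal.ofReal_ne_top]
  refine lintegral_congr fun s => ?_
  calc ENNReal.ofReal (Real.exp (R i i * (t - s)) * R i k) * Rn n k j s *
        ENNReal.ofReal (Real.exp (-γ * t))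
      = ENNReal.ofReal (Real.exp (R i i * (t - s)) * R i k) *
          ENNReal.ofReal (Real.exp (-γ * t)) * Rn n k j s := by ring
    _ = ENNReal.ofReal (Real.exp ((R i i - γ) * (t - s)) * R i k) *
          ENNReal.ofReal (Real.exp (-γ * s)) * Rn n k j s := by
        rw [ofReal_exp_mul_mul_ofReal_exp, ofReal_exp_mul_mul_ofReal_exp]
        ring_nf
    _ = _ := by ring

end perturbation

theorem successive_approximation_perturbation_general
    (R A : ℕ → ℕ → ℝ) (γ : ℝ)
    (hRpos : ∀ i j, i ≠ j → 0 ≤ R i j)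
    (hApos : ∀ i j, i ≠ j → 0 ≤ A i j)
    (hbdd : BddAbove (Set.range fun i => -A i i))
    (hγ : γ = ⨆ i, -A i i)
    (Rn Qn : ℕ → ℕ → ℕ → ℝ → ℝ≥0∞)
    (hRn0 : ∀ i j t, 0 ≤ t → Rn 0 i j t =
      if i = j then ENNReal.ofReal (Real.exp (R i i * t)) else 0)
    (hRnrec : ∀ n i j t, 0 ≤ t → Rn (n + 1) i j t =
      ∑' k, if k = i then 0 else
        ∫⁻ s in Set.Ioc (0 : ℝ) t,
          ENNReal.ofReal (Real.exp (R i i * (t - s)) * R i k) * Rn n k j s)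
    (hQn0 : ∀ i j t, 0 ≤ t → Qn 0 i j t =
      if i = j then ENNReal.ofReal (Real.exp ((R i i - γ) * t)) else 0)
    (hQnrec : ∀ n i j t, 0 ≤ t → Qn (n + 1) i j t =
      ∑' k, ∫⁻ s in Set.Ioc (0 : ℝ) t,
        ENNReal.ofReal (Real.exp ((R i i - γ) * (t - s)) *
          ((A i k + if i = k then γ else 0) + if k = i then 0 else R i k)) * Qn n k j s) :
    ∀ n i j t, 0 ≤ t →
      Qn n i j t =
        (∑ p ∈ Finset.range n, ∑' l, ∑' k,
          ∫⁻ s in Set.Ioc (0 : ℝ) t,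
            ENNReal.ofReal (Real.exp (-γ * (t - s))) * Rn (n - p - 1) i l (t - s) *
              ENNReal.ofReal (A l k + if l = k then γ else 0) * Qn p k j s)
        + Rn n i j t * ENNReal.ofReal (Real.exp (-γ * t)) := by
  have hA : ∀ l k, 0 ≤ A l k + if l = k then γ else 0 :=
    hγ ▸ add_ite_iSup_neg_diag_nonneg hApos hbdd
  have hF := measurable_jumpKernel R γ
  have hS₀ := measurable_diagKernel R γ
  have hB := measurable_mulMat hS₀ (shiftDiag A γ)
  have hFB : ∀ i k, Measurable ((jumpKernel R γ + mulMat (diagKernel R γ) (shiftDiag A γ)) i k) :=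
    fun i k => (hF i k).add (hB i k)
  have hRS := iterate_matConv_of_recursion
    (X := fun n i j t => Rn n i j t * ENNReal.ofReal (Real.exp (-γ * t)))
    (mul_exp_zero_eq_diagKernel hRn0) (mul_exp_succ_eq_matConv_jumpKernel hRnrec)
  have hQS := iterate_matConv_of_recursion (F := jumpKernel R γ + _) (G := diagKernel R γ) hQn0
    fun n i j t ht => by rw [hQnrec n i j t ht, jumpKernel_add_mulMat_diagKernel hRpos hA]; rfl
  intro n i j t ht
  rw [hQS n i j t ht, iterate_matConv_add hF hB hS₀, Pi.add_apply, Pi.add_apply, Pi.add_apply,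
    hRS n i j t ht]
  simp only [Finset.sum_apply]
  refine congrArg (· + _) (Finset.sum_congr rfl fun p _ => ?_)
  rw [iterate_matConv_mulMat hF hS₀, matConv_mulMat_apply (measurable_iterate_matConv hF hS₀ _)
    (measurable_iterate_matConv hFB hS₀ _)]
  refine tsum_congr fun l => tsum_congr fun k => setLIntegral_congr_fun measurableSet_Ioc ?_
  intro s hs
  dsimp only
  rw [← hRS _ i l (t - s) (sub_nonneg.2 hs.2), ← hQS p k j s hs.1.le, shiftDiag]
  ring

/-- identity relating the successive approximations `Q^(n)` of the
perturbed matrix `Q = R + A` (with `q'_{ik} = a'_{ik} + (1-δ_{ik}) r_{ik}`,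
`a'_{ij} = a_{ij} + γ δ_{ij}`, `γ = sup_i a_i`) to those of `R`:
`Q^(n)_ij(t) = Σ_{p<n} Σ_{l,k} ∫_0^t e^{-γ(t-s)} R^(n-p-1)_il(t-s) a'_lk Q^(p)_kj(s) ds
               + R^(n)_ij(t) e^{-γ t}`.
Here `r_i = -R i i`, `a_i = -A i i`, so `e^{-r_i t} = exp (R i i * t)` and
`e^{-(r_i+γ)t} = exp ((R i i - γ) * t)`. -/
theorem successive_approximation_perturbation
    (R A : ℕ → ℕ → ℝ) (γ : ℝ)
    (hRpos : ∀ i j, i ≠ j → 0 ≤ R i j)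
    (hRstable : ∀ i, Summable (R i))
    (hRcons : ∀ i, ∑' j, R i j = 0)
    (hApos : ∀ i j, i ≠ j → 0 ≤ A i j)
    (hAstable : ∀ i, Summable (A i))
    (hAcons : ∀ i, ∑' j, A i j = 0)
    (hbdd : BddAbove (Set.range fun i => -A i i))
    (hγ : γ = ⨆ i, -A i i)
    (Rn Qn : ℕ → ℕ → ℕ → ℝ → ℝ≥0∞)
    (hRn0 : ∀ i j t, 0 ≤ t → Rn 0 i j t =
      if i = j then ENNReal.ofReal (Real.exp (R i i * t)) else 0)
    (hRnrec : ∀ n i j t, 0 ≤ t → Rn (n + 1) i j t =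
      ∑' k, if k = i then 0 else
        ∫⁻ s in Set.Ioc (0 : ℝ) t,
          ENNReal.ofReal (Real.exp (R i i * (t - s)) * R i k) * Rn n k j s)
    (hQn0 : ∀ i j t, 0 ≤ t → Qn 0 i j t =
      if i = j then ENNReal.ofReal (Real.exp ((R i i - γ) * t)) else 0)
    (hQnrec : ∀ n i j t, 0 ≤ t → Qn (n + 1) i j t =
      ∑' k, ∫⁻ s in Set.Ioc (0 : ℝ) t,
        ENNReal.ofReal (Real.exp ((R i i - γ) * (t - s)) *
          ((A i k + if i = k then γ else 0) + if k = i then 0 else R i k)) * Qn n k j s) :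
    ∀ n i j t, 0 ≤ t →
      Qn n i j t =
        (∑ p ∈ Finset.range n, ∑' l, ∑' k,
          ∫⁻ s in Set.Ioc (0 : ℝ) t,
            ENNReal.ofReal (Real.exp (-γ * (t - s))) * Rn (n - p - 1) i l (t - s) *
              ENNReal.ofReal (A l k + if l = k then γ else 0) * Qn p k j s)
        + Rn n i j t * ENNReal.ofReal (Real.exp (-γ * t)) :=
  successive_approximation_perturbation_general R A γ hRpos hApos hbdd hγ Rn Qn hRn0 hRnrec hQn0
    hQnrec
end

section
/- Let R be a stable conservative Q-matrix on ℕ with Feller minimal transition function R(t), let A be a bounded stable conservative Q-matrix with γ = sup_i a_i < ∞, and set Q = R + A with Feller minimal transition function Q(t), a'_ij = a_ij + γ δ_ij. Then Q_ij(t) satisfies the equation Q_ij(t) = Σ_{l,k} ∫_0^t e^{-γ(t−s)} R_il(t−s) a'_lk Q_kj(s) ds + R_ij(t) e^{-γ t}. -/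
/-!
Both families are successive approximations with the same diagonal factor `e^{(R_ii - γ) t}`:
`Q^(n)` with jump rates `a' + r`, where `r` is the off-diagonal part of `R`, and `e^{-γt} R^(n)`
with jump rates `r` alone. Cutting a `Q`-path at its first `a'`-jump gives
`Q^(n+1) = e^{-γt} R^(n+1) + Σ_{m+q=n} (e^{-γ·} R^(m)) ⋆ a' Q^(q)`, by induction on `n` using
associativity of convolution on `(0, t]` (Mathlib's `lconvolution_assoc` after extending by zero
to `ℝ`). Summing over `n` gives the equation.
-/

open MeasureTheory ENNReal

open Finset.HasAntidiagonal

theorem ENNReal.tsum_sum_antidiagonal (f : ℕ × ℕ → ℝ≥0∞) :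
    ∑' n, ∑ p ∈ antidiagonal n, f p = ∑' m, ∑' q, f (m, q) := by
  calc ∑' n, ∑ p ∈ antidiagonal n, f p = ∑' x : Σ n : ℕ, antidiagonal n, f (x.2 : ℕ × ℕ) := by
        rw [ENNReal.tsum_sigma']
        exact tsum_congr fun n => (Finset.tsum_subtype _ f).symm
    _ = ∑' p, f p := Finset.HasAntidiagonal.sigmaAntidiagonalEquivProd.tsum_eq f
    _ = ∑' m, ∑' q, f (m, q) := ENNReal.tsum_prod'

namespace MinimalTransition

noncomputable def causalConv (f g : ℝ → ℝ≥0∞) (t : ℝ) : ℝ≥0∞ :=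
  ∫⁻ s in Set.Ioc 0 t, f (t - s) * g s

variable {f f' g g' h : ℝ → ℝ≥0∞}

theorem causalConv_of_nonpos {t : ℝ} (ht : t ≤ 0) : causalConv f g t = 0 := by
  simp [causalConv, Set.Ioc_eq_empty (not_lt.2 ht)]

theorem causalConv_eq_lconvolution :
    causalConv f g = (Set.Ici 0).indicator f ⋆ₗ (Set.Ici 0).indicator g := by
  ext t
  rw [lconvolution_comm, lconvolution_def, causalConv, setLIntegral_congr Ioc_ae_eq_Icc,
    ← lintegral_indicator measurableSet_Icc]
  refine lintegral_congr fun s => ?_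
  by_cases hs : s ∈ Set.Icc 0 t
  · simp [hs.1, hs.2, neg_add_eq_sub, mul_comm]
  · simp only [Set.indicator_of_notMem hs, Set.indicator_apply, Set.mem_Ici, neg_add_eq_sub,
      sub_nonneg]
    rw [Set.mem_Icc, not_and_or, not_le, not_le] at hs
    rcases hs with hs | hs <;> simp [hs.not_ge]

theorem indicator_causalConv : (Set.Ici 0).indicator (causalConv f g) = causalConv f g := by
  ext t
  by_cases ht : 0 ≤ t
  · simp [ht]
  · simp [ht, causalConv_of_nonpos (not_le.1 ht).le]

theorem measurable_causalConv (hf : Measurable f) (hg : Measurable g) :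
    Measurable (causalConv f g) := by
  rw [causalConv_eq_lconvolution]
  exact measurable_lconvolution _ (hf.indicator measurableSet_Ici) (hg.indicator measurableSet_Ici)

theorem causalConv_assoc (hf : Measurable f) (hg : Measurable g) (hh : Measurable h) :
    causalConv (causalConv f g) h = causalConv f (causalConv g h) := by
  simp only [causalConv_eq_lconvolution (f := causalConv _ _) (g := h),
    causalConv_eq_lconvolution (f := f) (g := causalConv _ _), indicator_causalConv]
  rw [causalConv_eq_lconvolution, causalConv_eq_lconvolution,
    lconvolution_assoc (hf.indicator measurableSet_Ici) (hg.indicator measurableSet_Ici)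
      (hh.indicator measurableSet_Ici)]

theorem measurable_causalConv_integrand (hf : Measurable f) (hg : Measurable g) (t : ℝ) :
    Measurable fun s => f (t - s) * g s :=
  (hf.comp (measurable_const.sub measurable_id)).mul hg

theorem causalConv_add_left (hf : Measurable f) (hg : Measurable g) (t : ℝ) :
    causalConv (f + f') g t = causalConv f g t + causalConv f' g t := by
  simp only [causalConv, Pi.add_apply, add_mul]
  exact lintegral_add_left (measurable_causalConv_integrand hf hg t) _

theorem causalConv_add_right (hf : Measurable f) (hg : Measurable g) (t : ℝ) :
    causalConv f (g + g') t = causalConv f g t + causalConv f g' t := by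
  simp only [causalConv, Pi.add_apply, mul_add]
  exact lintegral_add_left (measurable_causalConv_integrand hf hg t) _

theorem causalConv_tsum_right {ι : Type*} [Countable ι] {g : ι → ℝ → ℝ≥0∞}
    (hf : Measurable f) (hg : ∀ n, Measurable (g n)) (t : ℝ) :
    causalConv f (fun s => ∑' n, g n s) t = ∑' n, causalConv f (g n) t := by
  simp only [causalConv, ← ENNReal.tsum_mul_left]
  exact lintegral_tsum fun n => (measurable_causalConv_integrand hf (hg n) t).aemeasurable

theorem causalConv_tsum_left {ι : Type*} [Countable ι] {f : ι → ℝ → ℝ≥0∞}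
    (hf : ∀ n, Measurable (f n)) (hg : Measurable g) (t : ℝ) :
    causalConv (fun τ => ∑' n, f n τ) g t = ∑' n, causalConv (f n) g t := by
  simp only [causalConv, ← ENNReal.tsum_mul_right]
  exact lintegral_tsum fun n => (measurable_causalConv_integrand (hf n) hg t).aemeasurable

section Matrix

variable {ι : Type*} {F G H : ι → ι → ℝ → ℝ≥0∞}

noncomputable def matConv (F G : ι → ι → ℝ → ℝ≥0∞) (i j : ι) (t : ℝ) : ℝ≥0∞ :=
  ∑' k, causalConv (F i k) (G k j) t

theorem measurable_matConv [Countable ι] (hF : ∀ i k, Measurable (F i k))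
    (hG : ∀ k j, Measurable (G k j)) (i j : ι) : Measurable (matConv F G i j) :=
  Measurable.tsum fun k => measurable_causalConv (hF i k) (hG k j)

theorem matConv_assoc [Countable ι] (hF : ∀ i k, Measurable (F i k))
    (hG : ∀ k j, Measurable (G k j)) (hH : ∀ k j, Measurable (H k j)) :
    matConv (matConv F G) H = matConv F (matConv G H) := by
  ext i j t
  calc matConv (matConv F G) H i j t
      = ∑' l, ∑' k, causalConv (causalConv (F i k) (G k l)) (H l j) t := by
        refine tsum_congr fun l => ?_
        exact causalConv_tsum_left (fun k => measurable_causalConv (hF i k) (hG k l)) (hH l j) t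
    _ = ∑' k, ∑' l, causalConv (F i k) (causalConv (G k l) (H l j)) t := by
        rw [ENNReal.tsum_comm]
        simp only [causalConv_assoc (hF _ _) (hG _ _) (hH _ _)]
    _ = matConv F (matConv G H) i j t := by
        refine tsum_congr fun k => ?_
        exact (causalConv_tsum_right (hF i k)
          (fun l => measurable_causalConv (hG k l) (hH l j)) t).symm

theorem matConv_add_left (hF : ∀ i k, Measurable (F i k)) (hG : ∀ k j, Measurable (G k j)) :
    matConv (F + H) G = matConv F G + matConv H G := by
  ext i j t
  simp only [matConv, Pi.add_apply, ← ENNReal.tsum_add]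
  exact tsum_congr fun k => causalConv_add_left (hF i k) (hG k j) t

theorem matConv_add_right (hF : ∀ i k, Measurable (F i k)) (hG : ∀ k j, Measurable (G k j)) :
    matConv F (G + H) = matConv F G + matConv F H := by
  ext i j t
  simp only [matConv, Pi.add_apply, ← ENNReal.tsum_add]
  exact tsum_congr fun k => causalConv_add_right (hF i k) (hG k j) t

theorem matConv_sum_right {κ : Type*} (s : Finset κ) {G : κ → ι → ι → ℝ → ℝ≥0∞}
    (hF : ∀ i k, Measurable (F i k)) (hG : ∀ p k j, Measurable (G p k j)) :
    matConv F (∑ p ∈ s, G p) = ∑ p ∈ s, matConv F (G p) := by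
  classical
  induction s using Finset.induction_on with
  | empty => ext; simp [matConv, causalConv]
  | insert p s hp ih =>
    rw [Finset.sum_insert hp, Finset.sum_insert hp, matConv_add_right hF (hG p), ih]

theorem matConv_tsum_left {κ : Type*} [Countable κ] {F : κ → ι → ι → ℝ → ℝ≥0∞}
    (hF : ∀ p i k, Measurable (F p i k)) (hG : ∀ k j, Measurable (G k j)) (i j : ι) (t : ℝ) :
    matConv (fun i k τ => ∑' p, F p i k τ) G i j t = ∑' p, matConv (F p) G i j t := by
  simp only [matConv]
  rw [ENNReal.tsum_comm]
  exact tsum_congr fun k => causalConv_tsum_left (fun p => hF p i k) (hG k j) t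

theorem matConv_tsum_right {κ : Type*} [Countable κ] {G : κ → ι → ι → ℝ → ℝ≥0∞}
    (hF : ∀ i k, Measurable (F i k)) (hG : ∀ p k j, Measurable (G p k j)) (i j : ι) (t : ℝ) :
    matConv F (fun k j s => ∑' p, G p k j s) i j t = ∑' p, matConv F (G p) i j t := by
  simp only [matConv]
  rw [ENNReal.tsum_comm]
  exact tsum_congr fun k => causalConv_tsum_right (hF i k) (fun p => hG p k j) t

end Matrix

section Approximation

variable {ι : Type*} {c : ι → ℝ} {b b₁ b₂ : ι → ι → ℝ≥0∞}

noncomputable def jumpKernel (c : ι → ℝ) (b : ι → ι → ℝ≥0∞) (i k : ι) (τ : ℝ) : ℝ≥0∞ :=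
  ENNReal.ofReal (Real.exp (c i * τ)) * b i k

noncomputable def constMatMul (b : ι → ι → ℝ≥0∞) (G : ι → ι → ℝ → ℝ≥0∞) (l j : ι) (s : ℝ) :
    ℝ≥0∞ :=
  ∑' k, b l k * G k j s

theorem measurable_ofReal_exp_mul (a : ℝ) :
    Measurable fun τ => ENNReal.ofReal (Real.exp (a * τ)) :=
  (Real.continuous_exp.comp (continuous_const_mul a)).measurable.ennreal_ofReal

theorem measurable_jumpKernel (i k : ι) : Measurable (jumpKernel c b i k) :=
  (measurable_ofReal_exp_mul _).mul_const _

theorem measurable_constMatMul [Countable ι] {G : ι → ι → ℝ → ℝ≥0∞}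
    (hG : ∀ k j, Measurable (G k j)) (l j : ι) : Measurable (constMatMul b G l j) :=
  Measurable.tsum fun k => (hG k j).const_mul _

theorem constMatMul_tsum {κ : Type*} {G : κ → ι → ι → ℝ → ℝ≥0∞} :
    constMatMul b (fun k j s => ∑' q, G q k j s) =
      fun l j s => ∑' q, constMatMul b (G q) l j s := by
  ext l j s
  simp only [constMatMul, ← ENNReal.tsum_mul_left]
  exact ENNReal.tsum_comm

theorem matConv_constMatMul_apply [Countable ι] {F G : ι → ι → ℝ → ℝ≥0∞}
    (hF : ∀ i k, Measurable (F i k)) (hG : ∀ k j, Measurable (G k j))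
    (i j : ι) (t : ℝ) :
    matConv F (constMatMul b G) i j t =
      ∑' l, ∑' k, ∫⁻ s in Set.Ioc 0 t, F i l (t - s) * (b l k * G k j s) :=
  tsum_congr fun l => causalConv_tsum_right (hF i l) (fun k => (hG k j).const_mul _) t

theorem jumpKernel_add : jumpKernel c (b₁ + b₂) = jumpKernel c b₁ + jumpKernel c b₂ := by
  ext i k τ
  simp [jumpKernel, mul_add]

variable [DecidableEq ι]

noncomputable def expDiag (c : ι → ℝ) (i l : ι) (τ : ℝ) : ℝ≥0∞ :=
  if i = l then ENNReal.ofReal (Real.exp (c i * τ)) else 0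

/-- The second successive approximation scheme with `r_i = -c i` and jump rates `b`. -/
noncomputable def successiveApprox (c : ι → ℝ) (b : ι → ι → ℝ≥0∞) : ℕ → ι → ι → ℝ → ℝ≥0∞
  | 0 => expDiag c
  | n + 1 => matConv (jumpKernel c b) (successiveApprox c b n)

noncomputable def minimalSolution (c : ι → ℝ) (b : ι → ι → ℝ≥0∞) (i j : ι) (t : ℝ) : ℝ≥0∞ :=
  ∑' n, successiveApprox c b n i j t

theorem measurable_expDiag (i l : ι) : Measurable (expDiag c i l) := by
  unfold expDiag
  split_ifs
  exacts [measurable_ofReal_exp_mul _, measurable_const]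

theorem measurable_successiveApprox [Countable ι] (n : ℕ) (i j : ι) :
    Measurable (successiveApprox c b n i j) := by
  induction n generalizing i j with
  | zero => exact measurable_expDiag i j
  | succ n ih => exact measurable_matConv measurable_jumpKernel ih i j

theorem measurable_minimalSolution [Countable ι] (i j : ι) :
    Measurable (minimalSolution c b i j) :=
  Measurable.tsum fun n => measurable_successiveApprox n i j

theorem matConv_jumpKernel [Countable ι] {G : ι → ι → ℝ → ℝ≥0∞}
    (hG : ∀ k j, Measurable (G k j)) :
    matConv (jumpKernel c b) G = matConv (expDiag c) (constMatMul b G) := by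
  ext i j t
  have hoff : ∀ l, l ≠ i → causalConv (expDiag c i l) (constMatMul b G l j) t = 0 := fun l hl => by
    simp [causalConv, expDiag, Ne.symm hl]
  rw [matConv, matConv, tsum_eq_single i hoff]
  have hdiag : expDiag c i i = fun τ => ENNReal.ofReal (Real.exp (c i * τ)) := by
    ext τ; simp [expDiag]
  rw [hdiag, show constMatMul b G i j = fun s => ∑' k, b i k * G k j s from rfl,
    causalConv_tsum_right (measurable_ofReal_exp_mul _) fun k => (hG k j).const_mul _]
  simp only [causalConv, jumpKernel, mul_assoc]

theorem matConv_jumpKernel_successiveApprox [Countable ι] {G : ι → ι → ℝ → ℝ≥0∞}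
    (hG : ∀ k j, Measurable (G k j)) (m : ℕ) :
    matConv (jumpKernel c b) (matConv (successiveApprox c b m) G) =
      matConv (successiveApprox c b (m + 1)) G :=
  (matConv_assoc measurable_jumpKernel (measurable_successiveApprox m) hG).symm

theorem successiveApprox_add_succ [Countable ι] (n : ℕ) :
    successiveApprox c (b₁ + b₂) (n + 1) = successiveApprox c b₂ (n + 1) +
      ∑ p ∈ antidiagonal n, matConv (successiveApprox c b₂ p.1)
        (constMatMul b₁ (successiveApprox c (b₁ + b₂) p.2)) := by
  have hsplit : ∀ m, successiveApprox c (b₁ + b₂) (m + 1) =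
      matConv (successiveApprox c b₂ 0) (constMatMul b₁ (successiveApprox c (b₁ + b₂) m)) +
        matConv (jumpKernel c b₂) (successiveApprox c (b₁ + b₂) m) := fun m => by
    rw [show successiveApprox c (b₁ + b₂) (m + 1) =
        matConv (jumpKernel c (b₁ + b₂)) (successiveApprox c (b₁ + b₂) m) from rfl,
      jumpKernel_add, matConv_add_left measurable_jumpKernel
      (measurable_successiveApprox m), matConv_jumpKernel (measurable_successiveApprox m)]
    rfl
  induction n with
  | zero =>
    rw [hsplit, Finset.Nat.antidiagonal_zero, Finset.sum_singleton, add_comm]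
    rfl
  | succ n ih =>
    have hstep : matConv (jumpKernel c b₂) (successiveApprox c (b₁ + b₂) (n + 1)) =
        successiveApprox c b₂ (n + 2) + ∑ p ∈ antidiagonal n,
          matConv (successiveApprox c b₂ (p.1 + 1))
            (constMatMul b₁ (successiveApprox c (b₁ + b₂) p.2)) := by
      rw [ih, matConv_add_right measurable_jumpKernel (measurable_successiveApprox _),
        matConv_sum_right _ measurable_jumpKernel fun p => measurable_matConv
          (measurable_successiveApprox _) (measurable_constMatMul (measurable_successiveApprox _))]
      simp only [matConv_jumpKernel_successiveApprox
        (measurable_constMatMul (measurable_successiveApprox _))]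
      rfl
    rw [hsplit, hstep, Finset.Nat.sum_antidiagonal_succ]
    exact add_left_comm _ _ _

theorem minimalSolution_add [Countable ι] (i j : ι) (t : ℝ) :
    minimalSolution c (b₁ + b₂) i j t = minimalSolution c b₂ i j t +
      matConv (minimalSolution c b₂) (constMatMul b₁ (minimalSolution c (b₁ + b₂))) i j t := by
  set X := successiveApprox c (b₁ + b₂)
  set Y := successiveApprox c b₂
  have hX : ∀ q k j, Measurable (X q k j) := measurable_successiveApprox
  have hY : ∀ m k j, Measurable (Y m k j) := measurable_successiveApprox
  have hconv : matConv (minimalSolution c b₂) (constMatMul b₁ (minimalSolution c (b₁ + b₂))) i j t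
      = ∑' m, ∑' q, matConv (Y m) (constMatMul b₁ (X q)) i j t := by
    rw [show minimalSolution c b₂ = fun i k τ => ∑' m, Y m i k τ from rfl,
      matConv_tsum_left hY (measurable_constMatMul measurable_minimalSolution)]
    refine tsum_congr fun m => ?_
    rw [show minimalSolution c (b₁ + b₂) = fun k j s => ∑' q, X q k j s from rfl, constMatMul_tsum,
      matConv_tsum_right (hY m) fun q => measurable_constMatMul (hX q)]
  calc minimalSolution c (b₁ + b₂) i j t = X 0 i j t + ∑' n, X (n + 1) i j t :=
        tsum_eq_zero_add' ENNReal.summable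
    _ = Y 0 i j t + ∑' n, (Y (n + 1) i j t +
          ∑ p ∈ antidiagonal n, matConv (Y p.1) (constMatMul b₁ (X p.2)) i j t) := by
        simp only [X, Y, successiveApprox_add_succ, Pi.add_apply, Finset.sum_apply]
        rfl
    _ = _ := by
        rw [ENNReal.tsum_add, ← add_assoc,
          ← tsum_eq_zero_add' (f := fun n => Y n i j t) ENNReal.summable,
          ENNReal.tsum_sum_antidiagonal, hconv]
        rfl

theorem successiveApprox_sub_const (γ : ℝ) (n : ℕ) (i j : ι) (t : ℝ) :
    successiveApprox (fun i => c i - γ) b n i j t =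
      ENNReal.ofReal (Real.exp (-γ * t)) * successiveApprox c b n i j t := by
  induction n generalizing i j t with
  | zero =>
    simp only [successiveApprox, expDiag]
    split_ifs
    · rw [← ENNReal.ofReal_mul (Real.exp_nonneg _), ← Real.exp_add]
      ring_nf
    · rw [mul_zero]
  | succ n ih =>
    simp only [successiveApprox, matConv, causalConv, ← ENNReal.tsum_mul_left]
    refine tsum_congr fun k => ?_
    rw [← lintegral_const_mul' _ _ ENNReal.ofReal_ne_top]
    refine lintegral_congr fun s => ?_
    rw [ih, jumpKernel, jumpKernel]
    calc ENNReal.ofReal (Real.exp ((c i - γ) * (t - s))) * b i k *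
          (ENNReal.ofReal (Real.exp (-γ * s)) * successiveApprox c b n k j s)
        = ENNReal.ofReal (Real.exp ((c i - γ) * (t - s)) * Real.exp (-γ * s)) * b i k *
            successiveApprox c b n k j s := by
          rw [ENNReal.ofReal_mul (Real.exp_nonneg _)]; ring
      _ = ENNReal.ofReal (Real.exp (-γ * t) * Real.exp (c i * (t - s))) * b i k *
            successiveApprox c b n k j s := by
          rw [← Real.exp_add, ← Real.exp_add]; ring_nf
      _ = _ := by rw [ENNReal.ofReal_mul (Real.exp_nonneg _)]; ring

theorem eq_successiveApprox_of_recursion {X : ℕ → ι → ι → ℝ → ℝ≥0∞} {w : ι → ι → ℝ}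
    (h0 : ∀ i j t, 0 ≤ t → X 0 i j t = if i = j then ENNReal.ofReal (Real.exp (c i * t)) else 0)
    (hsucc : ∀ n i j t, 0 ≤ t → X (n + 1) i j t = ∑' k, ∫⁻ s in Set.Ioc 0 t,
      ENNReal.ofReal (Real.exp (c i * (t - s)) * w i k) * X n k j s)
    (n : ℕ) (i j : ι) {t : ℝ} (ht : 0 ≤ t) :
    X n i j t = successiveApprox c (fun i k => ENNReal.ofReal (w i k)) n i j t := by
  induction n generalizing i j t with
  | zero => exact h0 i j t ht
  | succ n ih =>
    rw [hsucc n i j t ht]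
    refine tsum_congr fun k => setLIntegral_congr_fun measurableSet_Ioc fun s hs => ?_
    rw [ih k j hs.1.le, ENNReal.ofReal_mul (Real.exp_nonneg _)]
    rfl

theorem eq_successiveApprox_of_offDiag_recursion {X : ℕ → ι → ι → ℝ → ℝ≥0∞} {w : ι → ι → ℝ}
    (h0 : ∀ i j t, 0 ≤ t → X 0 i j t = if i = j then ENNReal.ofReal (Real.exp (c i * t)) else 0)
    (hsucc : ∀ n i j t, 0 ≤ t → X (n + 1) i j t = ∑' k, if k = i then 0 else
      ∫⁻ s in Set.Ioc 0 t, ENNReal.ofReal (Real.exp (c i * (t - s)) * w i k) * X n k j s)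
    (n : ℕ) (i j : ι) {t : ℝ} (ht : 0 ≤ t) :
    X n i j t =
      successiveApprox c (fun i k => ENNReal.ofReal (if k = i then 0 else w i k)) n i j t := by
  refine eq_successiveApprox_of_recursion h0 (fun n i j t ht => ?_) n i j ht
  rw [hsucc n i j t ht]
  refine tsum_congr fun k => ?_
  split_ifs with hk
  · simp
  · rfl

end Approximation

theorem shiftedRate_nonneg {ι : Type*} [DecidableEq ι] {A : ι → ι → ℝ} {γ : ℝ}
    (hA : ∀ i j, i ≠ j → 0 ≤ A i j) (hγ : ∀ i, -A i i ≤ γ) (l k : ι) :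
    0 ≤ A l k + if l = k then γ else 0 := by
  split_ifs with h
  · subst h
    linarith [hγ l]
  · simpa using hA l k h

end MinimalTransition

open MinimalTransition

theorem minimal_transition_perturbation_equation_general
    (R A : ℕ → ℕ → ℝ) (γ : ℝ)
    (hRpos : ∀ i j, i ≠ j → 0 ≤ R i j)
    (hApos : ∀ i j, i ≠ j → 0 ≤ A i j)
    (hbdd : BddAbove (Set.range fun i => -A i i))
    (hγ : γ = ⨆ i, -A i i)
    (Rn Qn : ℕ → ℕ → ℕ → ℝ → ℝ≥0∞)
    (hRn0 : ∀ i j t, 0 ≤ t → Rn 0 i j t =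
      if i = j then ENNReal.ofReal (Real.exp (R i i * t)) else 0)
    (hRnrec : ∀ n i j t, 0 ≤ t → Rn (n + 1) i j t =
      ∑' k, if k = i then 0 else
        ∫⁻ s in Set.Ioc (0 : ℝ) t,
          ENNReal.ofReal (Real.exp (R i i * (t - s)) * R i k) * Rn n k j s)
    (hQn0 : ∀ i j t, 0 ≤ t → Qn 0 i j t =
      if i = j then ENNReal.ofReal (Real.exp ((R i i - γ) * t)) else 0)
    (hQnrec : ∀ n i j t, 0 ≤ t → Qn (n + 1) i j t =
      ∑' k, ∫⁻ s in Set.Ioc (0 : ℝ) t,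
        ENNReal.ofReal (Real.exp ((R i i - γ) * (t - s)) *
          ((A i k + if i = k then γ else 0) + if k = i then 0 else R i k)) * Qn n k j s)
    (Rmin Qmin : ℕ → ℕ → ℝ → ℝ≥0∞)
    (hRmin : ∀ i j t, Rmin i j t = ∑' n, Rn n i j t)
    (hQmin : ∀ i j t, Qmin i j t = ∑' n, Qn n i j t) :
    ∀ i j t, 0 ≤ t →
      Qmin i j t =
        (∑' l, ∑' k, ∫⁻ s in Set.Ioc (0 : ℝ) t,
          ENNReal.ofReal (Real.exp (-γ * (t - s))) * Rmin i l (t - s) *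
            ENNReal.ofReal (A l k + if l = k then γ else 0) * Qmin k j s)
        + Rmin i j t * ENNReal.ofReal (Real.exp (-γ * t)) := by
  intro i j t ht
  set c : ℕ → ℝ := fun i => R i i - γ
  set a : ℕ → ℕ → ℝ≥0∞ := fun l k => ENNReal.ofReal (A l k + if l = k then γ else 0)
  set r : ℕ → ℕ → ℝ≥0∞ := fun l k => ENNReal.ofReal (if k = l then 0 else R l k)
  have hweight : (fun l k => ENNReal.ofReal ((A l k + if l = k then γ else 0) +
      if k = l then 0 else R l k)) = a + r := by
    ext l k
    refine ENNReal.ofReal_add (shiftedRate_nonneg hApos (fun l => hγ ▸ le_ciSup hbdd l) l k) ?_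
    split_ifs with h
    exacts [le_rfl, hRpos l k (Ne.symm h)]
  have hQ : ∀ k s, 0 ≤ s → Qmin k j s = minimalSolution c (a + r) k j s := fun k s hs =>
    (hQmin k j s).trans <| tsum_congr fun n => by
      rw [← hweight]
      exact eq_successiveApprox_of_recursion hQn0 hQnrec n k j hs
  have hR : ∀ l τ, 0 ≤ τ →
      ENNReal.ofReal (Real.exp (-γ * τ)) * Rmin i l τ = minimalSolution c r i l τ :=
    fun l τ hτ => by
    rw [hRmin, ← ENNReal.tsum_mul_left]
    refine tsum_congr fun n => ?_
    rw [successiveApprox_sub_const, eq_successiveApprox_of_offDiag_recursion hRn0 hRnrec n i l hτ]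
  rw [hQ i t ht, minimalSolution_add, matConv_constMatMul_apply measurable_minimalSolution
    measurable_minimalSolution, ← hR j t ht, add_comm, mul_comm]
  congr 1
  refine tsum_congr fun l => tsum_congr fun k =>
    setLIntegral_congr_fun measurableSet_Ioc fun s hs => ?_
  rw [← hR l _ (sub_nonneg.2 hs.2), ← hQ k s hs.1.le]
  ring

/-- the Feller minimal transition functions
`R_ij(t) = Σ_n R^(n)_ij(t)` and `Q_ij(t) = Σ_n Q^(n)_ij(t)` of `R` and of the
bounded perturbation `Q = R + A` satisfy
`Q_ij(t) = Σ_{l,k} ∫_0^t e^{-γ(t-s)} R_il(t-s) a'_lk Q_kj(s) ds + R_ij(t) e^{-γt}`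
with `a'_lk = a_lk + γ δ_lk` and `γ = sup_i a_i`. -/
theorem minimal_transition_perturbation_equation
    (R A : ℕ → ℕ → ℝ) (γ : ℝ)
    (hRpos : ∀ i j, i ≠ j → 0 ≤ R i j)
    (hRstable : ∀ i, Summable (R i))
    (hRcons : ∀ i, ∑' j, R i j = 0)
    (hApos : ∀ i j, i ≠ j → 0 ≤ A i j)
    (hAstable : ∀ i, Summable (A i))
    (hAcons : ∀ i, ∑' j, A i j = 0)
    (hbdd : BddAbove (Set.range fun i => -A i i))
    (hγ : γ = ⨆ i, -A i i)
    (Rn Qn : ℕ → ℕ → ℕ → ℝ → ℝ≥0∞)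
    (hRn0 : ∀ i j t, 0 ≤ t → Rn 0 i j t =
      if i = j then ENNReal.ofReal (Real.exp (R i i * t)) else 0)
    (hRnrec : ∀ n i j t, 0 ≤ t → Rn (n + 1) i j t =
      ∑' k, if k = i then 0 else
        ∫⁻ s in Set.Ioc (0 : ℝ) t,
          ENNReal.ofReal (Real.exp (R i i * (t - s)) * R i k) * Rn n k j s)
    (hQn0 : ∀ i j t, 0 ≤ t → Qn 0 i j t =
      if i = j then ENNReal.ofReal (Real.exp ((R i i - γ) * t)) else 0)
    (hQnrec : ∀ n i j t, 0 ≤ t → Qn (n + 1) i j t =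
      ∑' k, ∫⁻ s in Set.Ioc (0 : ℝ) t,
        ENNReal.ofReal (Real.exp ((R i i - γ) * (t - s)) *
          ((A i k + if i = k then γ else 0) + if k = i then 0 else R i k)) * Qn n k j s)
    (Rmin Qmin : ℕ → ℕ → ℝ → ℝ≥0∞)
    (hRmin : ∀ i j t, Rmin i j t = ∑' n, Rn n i j t)
    (hQmin : ∀ i j t, Qmin i j t = ∑' n, Qn n i j t) :
    ∀ i j t, 0 ≤ t →
      Qmin i j t =
        (∑' l, ∑' k, ∫⁻ s in Set.Ioc (0 : ℝ) t,
          ENNReal.ofReal (Real.exp (-γ * (t - s))) * Rmin i l (t - s) *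
            ENNReal.ofReal (A l k + if l = k then γ else 0) * Qmin k j s)
        + Rmin i j t * ENNReal.ofReal (Real.exp (-γ * t)) :=
  minimal_transition_perturbation_equation_general R A γ hRpos hApos hbdd hγ Rn Qn hRn0 hRnrec hQn0
    hQnrec Rmin Qmin hRmin hQmin
end

section
/- Let R(t) be a (sub-)transition function on ℕ (so R_il(t) ≥ 0 and Σ_l R_il(t) ≤ 1), let a'_lk ≥ 0 satisfy Σ_k a'_lk ≤ γ for all l, and fix j and bounded measurable functions g_i : [0,T] → [0,1]. Then the integral equation x_i(t) = Σ_{l,k} ∫_0^t e^{-γ(t−s)} R_il(t−s) a'_lk x_k(s) ds + g_i(t), for bounded measurable families (x_i)_{i∈ℕ} taking values in [0,1], has at most one solution. -/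
/-!
For two solutions `x`, `x'` put `c(s) = sup_k |x_k(s) - x'_k(s)| ≤ 1`. Since `e^{-γ(t-s)} ≤ 1`,
`Σ_l R_il ≤ 1` and `Σ_k a'_lk ≤ γ`, subtracting the two equations gives `c(t) ≤ γ ∫_0^t c(s) ds`;
iterating this from `c ≤ 1` yields `c(t) ≤ (γt)^n / n!` for every `n` (Gronwall), so `c = 0`.
-/

open MeasureTheory ENNReal Set
open scoped Nat NNReal

theorem setLIntegral_Ioc_ofReal_pow_div_factorial (K : ℝ≥0) {t : ℝ} (ht : 0 ≤ t) (n : ℕ) :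
    (K : ℝ≥0∞) * ∫⁻ s in Ioc 0 t, ENNReal.ofReal ((K * s) ^ n / n !) =
      ENNReal.ofReal ((K * t) ^ (n + 1) / (n + 1)!) := by
  have hnonneg : 0 ≤ᵐ[volume.restrict (Ioc 0 t)] fun s : ℝ => (K * s) ^ n / n ! := by
    filter_upwards [ae_restrict_mem measurableSet_Ioc] with s hs
    have : 0 ≤ (K : ℝ) * s := mul_nonneg K.coe_nonneg hs.1.le
    positivity
  rw [← ofReal_integral_eq_lintegral_ofReal (by fun_prop : Continuous _).integrableOn_Ioc hnonneg,
    ← ofReal_coe_nnreal, ← ENNReal.ofReal_mul K.coe_nonneg, ← intervalIntegral.integral_of_le ht]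
  have hpow : ∀ s : ℝ, (K * s) ^ n / n ! = (K : ℝ) ^ n / n ! * s ^ n := fun s => by ring
  simp_rw [hpow]
  rw [intervalIntegral.integral_const_mul, integral_pow, Nat.factorial_succ]
  congr 1
  push_cast
  rw [zero_pow n.succ_ne_zero, sub_zero]
  field_simp
  ring

theorem le_mul_ofReal_pow_div_factorial_of_le_mul_setLIntegral {c : ℝ → ℝ≥0∞} {K : ℝ≥0}
    {T : ℝ} {M : ℝ≥0∞} (hM : ∀ t ∈ Icc 0 T, c t ≤ M)
    (hc : ∀ t ∈ Icc 0 T, c t ≤ K * ∫⁻ s in Ioc 0 t, c s) (n : ℕ) :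
    ∀ t ∈ Icc 0 T, c t ≤ M * ENNReal.ofReal ((K * t) ^ n / n !) := by
  induction n with
  | zero => simpa using hM
  | succ n ih =>
    intro t ht
    calc c t ≤ K * ∫⁻ s in Ioc 0 t, c s := hc t ht
      _ ≤ K * ∫⁻ s in Ioc 0 t, M * ENNReal.ofReal ((K * s) ^ n / n !) := by
        gcongr 1
        exact setLIntegral_mono' measurableSet_Ioc fun s hs => ih s ⟨hs.1.le, hs.2.trans ht.2⟩
      _ = M * ENNReal.ofReal ((K * t) ^ (n + 1) / (n + 1)!) := by
        rw [lintegral_const_mul _ (by fun_prop), mul_left_comm,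
          setLIntegral_Ioc_ofReal_pow_div_factorial K ht.1]

theorem eq_zero_of_le_mul_setLIntegral {c : ℝ → ℝ≥0∞} {K : ℝ≥0} {T : ℝ} {M : ℝ≥0∞}
    (hM_ne_top : M ≠ ∞) (hM : ∀ t ∈ Icc 0 T, c t ≤ M)
    (hc : ∀ t ∈ Icc 0 T, c t ≤ K * ∫⁻ s in Ioc 0 t, c s) :
    ∀ t ∈ Icc 0 T, c t = 0 := by
  intro t ht
  have hlim : Filter.Tendsto (fun n : ℕ => M * ENNReal.ofReal ((K * t) ^ n / n !))
      Filter.atTop (nhds 0) := by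
    simpa using ENNReal.Tendsto.const_mul
      (ENNReal.tendsto_ofReal (FloorSemiring.tendsto_pow_div_factorial_atTop ((K : ℝ) * t)))
      (Or.inr hM_ne_top)
  exact nonpos_iff_eq_zero.mp <| ge_of_tendsto' hlim fun n =>
    le_mul_ofReal_pow_div_factorial_of_le_mul_setLIntegral hM hc n t ht

theorem tsum_tsum_mul_le_of_tsum_le_one {e c b : ℝ≥0∞} {r : ℕ → ℝ≥0∞} {a : ℕ → ℕ → ℝ≥0∞}
    (he : e ≤ 1) (hr : ∑' l, r l ≤ 1) (ha : ∀ l, ∑' k, a l k ≤ b) :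
    ∑' l, ∑' k, e * r l * a l k * c ≤ b * c :=
  calc ∑' l, ∑' k, e * r l * a l k * c = ∑' l, e * r l * c * ∑' k, a l k := by
        simp_rw [← ENNReal.tsum_mul_left, mul_right_comm _ c]
    _ ≤ ∑' l, 1 * r l * c * b := by gcongr with l; exact ha l
    _ = (∑' l, r l) * (b * c) := by
        rw [← ENNReal.tsum_mul_right]
        exact tsum_congr fun l => by ring
    _ ≤ b * c := by simpa using mul_le_mul_left hr (b * c)

noncomputable def perturbationIntegral (γ : ℝ) (R : ℕ → ℕ → ℝ → ℝ≥0∞) (a' : ℕ → ℕ → ℝ≥0∞)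
    (y : ℕ → ℝ → ℝ≥0∞) (i : ℕ) (t : ℝ) : ℝ≥0∞ :=
  ∑' l, ∑' k, ∫⁻ s in Ioc 0 t,
    ENNReal.ofReal (Real.exp (-γ * (t - s))) * R i l (t - s) * a' l k * y k s

section perturbationIntegral

variable {γ : ℝ} {R : ℕ → ℕ → ℝ → ℝ≥0∞} {a' : ℕ → ℕ → ℝ≥0∞} {i : ℕ} {t : ℝ}

theorem perturbationIntegral_mono {y z : ℕ → ℝ → ℝ≥0∞} (h : ∀ k, ∀ s ∈ Ioc 0 t, y k s ≤ z k s) :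
    perturbationIntegral γ R a' y i t ≤ perturbationIntegral γ R a' z i t :=
  ENNReal.tsum_le_tsum fun _ => ENNReal.tsum_le_tsum fun k =>
    setLIntegral_mono' measurableSet_Ioc fun s hs => mul_le_mul_right (h k s hs) _

theorem perturbationIntegral_add (hR : ∀ l, Measurable (R i l)) (y : ℕ → ℝ → ℝ≥0∞)
    {z : ℕ → ℝ → ℝ≥0∞} (hz : ∀ k, Measurable (z k)) :
    perturbationIntegral γ R a' (y + z) i t =
      perturbationIntegral γ R a' y i t + perturbationIntegral γ R a' z i t := by
  simp only [perturbationIntegral, Pi.add_apply, mul_add]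
  rw [← ENNReal.tsum_add]
  refine tsum_congr fun l => ?_
  rw [← ENNReal.tsum_add]
  exact tsum_congr fun k => lintegral_add_right _ (by fun_prop)

theorem perturbationIntegral_const_le {γ' : ℝ≥0∞} (hγ : 0 ≤ γ) (hR : ∀ l, Measurable (R i l))
    (hR_sum : ∀ u, ∑' l, R i l u ≤ 1) (ha' : ∀ l, ∑' k, a' l k ≤ γ') {c : ℝ → ℝ≥0∞}
    (hc : Measurable c) :
    perturbationIntegral γ R a' (fun _ => c) i t ≤ γ' * ∫⁻ s in Ioc 0 t, c s := by
  have hmeas : ∀ l k, Measurable fun s =>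
      ENNReal.ofReal (Real.exp (-γ * (t - s))) * R i l (t - s) * a' l k * c s :=
    fun l k => by fun_prop
  rw [perturbationIntegral, ← lintegral_const_mul _ hc,
    tsum_congr fun l => (lintegral_tsum fun k => (hmeas l k).aemeasurable).symm,
    ← lintegral_tsum fun l => (Measurable.tsum (hmeas l)).aemeasurable]
  refine setLIntegral_mono' measurableSet_Ioc fun s hs => tsum_tsum_mul_le_of_tsum_le_one ?_
    (hR_sum _) ha'
  rw [ENNReal.ofReal_le_one, Real.exp_le_one_iff]
  nlinarith [hs.2]

theorem perturbationIntegral_tsub_le {γ' : ℝ≥0∞} (hγ : 0 ≤ γ) (hR : ∀ l, Measurable (R i l))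
    (hR_sum : ∀ u, ∑' l, R i l u ≤ 1) (ha' : ∀ l, ∑' k, a' l k ≤ γ') {x x' : ℕ → ℝ → ℝ≥0∞}
    (hx' : ∀ k, Measurable (x' k)) {c : ℝ → ℝ≥0∞} (hc : Measurable c)
    (hxc : ∀ k, ∀ s ∈ Ioc 0 t, x k s - x' k s ≤ c s) :
    perturbationIntegral γ R a' x i t - perturbationIntegral γ R a' x' i t ≤
      γ' * ∫⁻ s in Ioc 0 t, c s := by
  rw [tsub_le_iff_right]
  calc perturbationIntegral γ R a' x i t
      ≤ perturbationIntegral γ R a' ((fun _ => c) + x') i t :=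
        perturbationIntegral_mono fun k s hs => tsub_le_iff_right.mp (hxc k s hs)
    _ = perturbationIntegral γ R a' (fun _ => c) i t + perturbationIntegral γ R a' x' i t :=
        perturbationIntegral_add hR _ hx'
    _ ≤ γ' * (∫⁻ s in Ioc 0 t, c s) + perturbationIntegral γ R a' x' i t :=
        add_le_add_left (perturbationIntegral_const_le hγ hR hR_sum ha' hc) _

end perturbationIntegral

theorem perturbation_equation_uniqueness_general
    (T γ : ℝ) (hγ : 0 ≤ γ)
    (R : ℕ → ℕ → ℝ → ℝ≥0∞)
    (hRmeas : ∀ i l, Measurable (R i l))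
    (hRsub : ∀ i t, ∑' l, R i l t ≤ 1)
    (a' : ℕ → ℕ → ℝ≥0∞)
    (ha' : ∀ l, ∑' k, a' l k ≤ ENNReal.ofReal γ)
    (g : ℕ → ℝ → ℝ≥0∞)
    (x x' : ℕ → ℝ → ℝ≥0∞)
    (hxmeas : ∀ i, Measurable (x i)) (hx'meas : ∀ i, Measurable (x' i))
    (hxle : ∀ i t, t ∈ Set.Icc 0 T → x i t ≤ 1)
    (hx'le : ∀ i t, t ∈ Set.Icc 0 T → x' i t ≤ 1)
    (hx : ∀ i t, t ∈ Set.Icc 0 T →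
      x i t = (∑' l, ∑' k, ∫⁻ s in Set.Ioc (0 : ℝ) t,
        ENNReal.ofReal (Real.exp (-γ * (t - s))) * R i l (t - s) * a' l k * x k s) + g i t)
    (hx' : ∀ i t, t ∈ Set.Icc 0 T →
      x' i t = (∑' l, ∑' k, ∫⁻ s in Set.Ioc (0 : ℝ) t,
        ENNReal.ofReal (Real.exp (-γ * (t - s))) * R i l (t - s) * a' l k * x' k s) + g i t) :
    ∀ i t, t ∈ Set.Icc 0 T → x i t = x' i t := by
  set c : ℝ → ℝ≥0∞ := fun s => ⨆ k, (x k s - x' k s) ⊔ (x' k s - x k s)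
  have hc_meas : Measurable c := by fun_prop
  have hc_le_one : ∀ s ∈ Icc 0 T, c s ≤ 1 := fun s hs => iSup_le fun k =>
    max_le (tsub_le_self.trans (hxle k s hs)) (tsub_le_self.trans (hx'le k s hs))
  have hc_rec : ∀ t ∈ Icc 0 T, c t ≤ ENNReal.ofReal γ * ∫⁻ s in Ioc 0 t, c s := by
    intro t ht
    refine iSup_le fun i => max_le ?_ ?_
    · rw [hx i t ht, hx' i t ht]
      exact add_tsub_add_le_tsub_right.trans <| perturbationIntegral_tsub_le hγ (hRmeas i)
        (hRsub i) ha' hx'meas hc_meas fun k s _ => le_iSup_of_le k le_sup_left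
    · rw [hx i t ht, hx' i t ht]
      exact add_tsub_add_le_tsub_right.trans <| perturbationIntegral_tsub_le hγ (hRmeas i)
        (hRsub i) ha' hxmeas hc_meas fun k s _ => le_iSup_of_le k le_sup_right
  have hc_zero := eq_zero_of_le_mul_setLIntegral (K := γ.toNNReal) one_ne_top hc_le_one hc_rec
  intro i t ht
  have hdist : (x i t - x' i t) ⊔ (x' i t - x i t) ≤ 0 :=
    (le_iSup_of_le i le_rfl).trans (hc_zero t ht).le
  rw [sup_le_iff, tsub_nonpos, tsub_nonpos] at hdist
  exact le_antisymm hdist.1 hdist.2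

/-- uniqueness of bounded `[0,1]`-valued solutions of the
perturbation integral equation
`x_i(t) = Σ_{l,k} ∫_0^t e^{-γ(t-s)} R_il(t-s) a'_lk x_k(s) ds + g_i(t)`
where `R` is a sub-transition function and `Σ_k a'_lk ≤ γ`. -/
theorem perturbation_equation_uniqueness
    (T γ : ℝ) (hγ : 0 ≤ γ)
    (R : ℕ → ℕ → ℝ → ℝ≥0∞)
    (hRmeas : ∀ i l, Measurable (R i l))
    (hRsub : ∀ i t, ∑' l, R i l t ≤ 1)
    (a' : ℕ → ℕ → ℝ≥0∞)
    (ha' : ∀ l, ∑' k, a' l k ≤ ENNReal.ofReal γ)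
    (g : ℕ → ℝ → ℝ≥0∞)
    (hgmeas : ∀ i, Measurable (g i))
    (hgle : ∀ i t, t ∈ Set.Icc 0 T → g i t ≤ 1)
    (x x' : ℕ → ℝ → ℝ≥0∞)
    (hxmeas : ∀ i, Measurable (x i)) (hx'meas : ∀ i, Measurable (x' i))
    (hxle : ∀ i t, t ∈ Set.Icc 0 T → x i t ≤ 1)
    (hx'le : ∀ i t, t ∈ Set.Icc 0 T → x' i t ≤ 1)
    (hx : ∀ i t, t ∈ Set.Icc 0 T →
      x i t = (∑' l, ∑' k, ∫⁻ s in Set.Ioc (0 : ℝ) t,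
        ENNReal.ofReal (Real.exp (-γ * (t - s))) * R i l (t - s) * a' l k * x k s) + g i t)
    (hx' : ∀ i t, t ∈ Set.Icc 0 T →
      x' i t = (∑' l, ∑' k, ∫⁻ s in Set.Ioc (0 : ℝ) t,
        ENNReal.ofReal (Real.exp (-γ * (t - s))) * R i l (t - s) * a' l k * x' k s) + g i t) :
    ∀ i t, t ∈ Set.Icc 0 T → x i t = x' i t :=
  perturbation_equation_uniqueness_general T γ hγ R hRmeas hRsub a' ha' g x x' hxmeas hx'meas hxle
    hx'le hx hx'
end
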